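/- For every n ∈ X, the quasi-transitivity axiom 4ⁿ: ♦ⁿA ⊃ ♦A is derivable in nK + ♦_{kX} + cut; hence if K + 4^X proves a formula A then nK + ♦_{kX} + cut proves A. -/
import Mathlib


/-! Formulas of modal logic in negation normal form. -/
inductive Formula : Type
  | pos : ℕ → Formula
  | neg : ℕ → Formula
  | and : Formula → Formula → Formula
  | or : Formula → Formula → Formula
  | box : Formula → Formula
  | dia : Formula → Formula
  deriving DecidableEq

namespace Formula

/-- Negation by de Morgan duality. -/
def negf : Formula → Formula
  | pos p => neg p
  | neg p => pos p
  | and A B => or A.negf B.negf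
  | or A B => and A.negf B.negf
  | box A => dia A.negf
  | dia A => box A.negf

/-- The (modal) degree of a formula. -/
def deg : Formula → ℕ
  | pos _ => 0
  | neg _ => 0
  | and A B => A.deg + B.deg
  | or A B => A.deg + B.deg
  | box A => A.deg + 1
  | dia A => A.deg + 1

/-- Implication `A ⊃ B := Ā ∨ B`. -/
def impl (A B : Formula) : Formula := or A.negf B

def bot : Formula := and (pos 0) (neg 0)

/-- `♦ⁿ A`. -/
def diaIter : ℕ → Formula → Formula
  | 0, A => A
  | n+1, A => dia (diaIter n A)

end Formula

/-- Nested sequents: finite multisets of formulas and boxed sequents,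
represented as list-like trees considered up to permutation (`NSeq.Perm`). -/
inductive NSeq : Type
  | nil : NSeq
  | fcons : Formula → NSeq → NSeq
  | bcons : NSeq → NSeq → NSeq

namespace NSeq

/-- Multiset union of nested sequents. -/
def append : NSeq → NSeq → NSeq
  | nil, Δ => Δ
  | fcons A Γ, Δ => fcons A (Γ.append Δ)
  | bcons B Γ, Δ => bcons B (Γ.append Δ)

/-- Multiset-like equivalence of nested sequents (hereditary permutation). -/
inductive Perm : NSeq → NSeq → Prop
  | nil : Perm nil nil
  | fcons (A : Formula) {Γ Δ : NSeq} : Perm Γ Δ → Perm (fcons A Γ) (fcons A Δ)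
  | bcons {B B' Γ Δ : NSeq} : Perm B B' → Perm Γ Δ → Perm (bcons B Γ) (bcons B' Δ)
  | swapff (A B : Formula) (Γ : NSeq) : Perm (fcons A (fcons B Γ)) (fcons B (fcons A Γ))
  | swapfb (A : Formula) (B Γ : NSeq) : Perm (fcons A (bcons B Γ)) (bcons B (fcons A Γ))
  | swapbf (A : Formula) (B Γ : NSeq) : Perm (bcons B (fcons A Γ)) (fcons A (bcons B Γ))
  | swapbb (B C Γ : NSeq) : Perm (bcons B (bcons C Γ)) (bcons C (bcons B Γ))
  | trans {Γ Δ Θ : NSeq} : Perm Γ Δ → Perm Δ Θ → Perm Γ Θ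

/-- The corresponding formula of a nested sequent. -/
def form : NSeq → Formula
  | nil => Formula.bot
  | fcons A Γ => Formula.or A Γ.form
  | bcons B Γ => Formula.or Γ.form (Formula.box B.form)

end NSeq

/-- Contexts: nested sequents with a single hole. -/
inductive Ctx : Type
  | hole : Ctx
  | fcons : Formula → Ctx → Ctx
  | scons : NSeq → Ctx → Ctx
  | binto : Ctx → NSeq → Ctx

namespace Ctx

/-- Filling the hole of a context with a nested sequent. -/
def fill : Ctx → NSeq → NSeq
  | hole, Δ => Δ
  | fcons A C, Δ => NSeq.fcons A (C.fill Δ)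
  | scons S C, Δ => NSeq.bcons S (C.fill Δ)
  | binto C S, Δ => NSeq.bcons (C.fill Δ) S

/-- The depth of a context. -/
def depth : Ctx → ℕ
  | hole => 0
  | fcons _ C => C.depth
  | scons _ C => C.depth
  | binto C _ => C.depth + 1

end Ctx

/-- `nestBox [Δ₁, …, Δₖ] Θ = [Δ₁, [Δ₂, [ … , [Δₖ, Θ'] … ]]]` where the innermost
box contains `Δₖ` together with the box `[Θ]`; i.e. a chain of `k+1` nested boxes
whose `i`-th box contains `Δᵢ` and whose innermost box is `[Θ]`. -/
def nestBox : List NSeq → NSeq → NSeq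
  | [], Θ => NSeq.bcons Θ NSeq.nil
  | Δ :: rest, Θ => NSeq.bcons (Δ.append (nestBox rest Θ)) NSeq.nil

/-- `iterBox n Δ`: `n` nested boxes around `Δ`. -/
def iterBox : ℕ → NSeq → NSeq
  | 0, Δ => Δ
  | n+1, Δ => NSeq.bcons (iterBox n Δ) NSeq.nil

/-- Proofs in the nested sequent system `nK` extended with the propagation rules
`♦ₖₙ` for `n ∈ Xk`, the propagation rules `♦₄ₙ` for `n ∈ X4`, and the cut rule
restricted to cut formulas whose degree satisfies `ρ`.  The index `h` is an upper
bound on the height of the proof. -/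
inductive Prf (Xk X4 : Set ℕ) (ρ : ℕ → Prop) : ℕ → NSeq → Prop
  | id (Γ : Ctx) (p : ℕ) (h : ℕ) :
      Prf Xk X4 ρ h (Γ.fill (NSeq.fcons (.pos p) (NSeq.fcons (.neg p) NSeq.nil)))
  | orR {h : ℕ} (Γ : Ctx) (A B : Formula) :
      Prf Xk X4 ρ h (Γ.fill (NSeq.fcons A (NSeq.fcons B NSeq.nil))) →
      Prf Xk X4 ρ (h+1) (Γ.fill (NSeq.fcons (.or A B) NSeq.nil))
  | andR {h : ℕ} (Γ : Ctx) (A B : Formula) :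
      Prf Xk X4 ρ h (Γ.fill (NSeq.fcons A NSeq.nil)) →
      Prf Xk X4 ρ h (Γ.fill (NSeq.fcons B NSeq.nil)) →
      Prf Xk X4 ρ (h+1) (Γ.fill (NSeq.fcons (.and A B) NSeq.nil))
  | boxR {h : ℕ} (Γ : Ctx) (A : Formula) :
      Prf Xk X4 ρ h (Γ.fill (NSeq.bcons (NSeq.fcons A NSeq.nil) NSeq.nil)) →
      Prf Xk X4 ρ (h+1) (Γ.fill (NSeq.fcons (.box A) NSeq.nil))
  | diaR {h : ℕ} (Γ : Ctx) (A : Formula) (Δ : NSeq) :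
      Prf Xk X4 ρ h (Γ.fill (NSeq.fcons (.dia A) (NSeq.bcons (NSeq.fcons A Δ) NSeq.nil))) →
      Prf Xk X4 ρ (h+1) (Γ.fill (NSeq.fcons (.dia A) (NSeq.bcons Δ NSeq.nil)))
  | propk {h : ℕ} (Γ : Ctx) (A : Formula) (Δs : List NSeq) (Δn : NSeq)
      (hn : Δs.length + 1 ∈ Xk) :
      Prf Xk X4 ρ h (Γ.fill (NSeq.fcons (.dia A) (nestBox Δs (NSeq.fcons A Δn)))) →
      Prf Xk X4 ρ (h+1) (Γ.fill (NSeq.fcons (.dia A) (nestBox Δs Δn)))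
  | prop4 {h : ℕ} (Γ : Ctx) (A : Formula) (Δs : List NSeq) (Δl : NSeq)
      (hn : Δs.length + 2 ∈ X4) :
      Prf Xk X4 ρ h (Γ.fill (NSeq.fcons (.dia A) (nestBox Δs (NSeq.fcons (.dia A) Δl)))) →
      Prf Xk X4 ρ (h+1) (Γ.fill (NSeq.fcons (.dia A) (nestBox Δs Δl)))
  | cut {h : ℕ} (Γ : Ctx) (A : Formula) (hA : ρ A.deg) :
      Prf Xk X4 ρ h (Γ.fill (NSeq.fcons A NSeq.nil)) →
      Prf Xk X4 ρ h (Γ.fill (NSeq.fcons A.negf NSeq.nil)) →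
      Prf Xk X4 ρ (h+1) (Γ.fill NSeq.nil)
  | exch {h : ℕ} {Γ Δ : NSeq} : NSeq.Perm Γ Δ → Prf Xk X4 ρ h Γ → Prf Xk X4 ρ h Δ

/-- No cut formula allowed: the cut-free system. -/
def cutFree : ℕ → Prop := fun _ => False

/-- Unrestricted cut. -/
def cutAll : ℕ → Prop := fun _ => True

/-- Provability (some proof of some height). -/
def Provable (Xk X4 : Set ℕ) (ρ : ℕ → Prop) (Γ : NSeq) : Prop := ∃ h, Prf Xk X4 ρ h Γ

/-- Hilbert-style provability in `K + 4^X`: classical propositional logic,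
axiom k, modus ponens, necessitation, and quasi-transitivity `♦ⁿA ⊃ ♦A` for `n ∈ X`. -/
inductive KProv (X : Set ℕ) : Formula → Prop
  | ax1 (A B : Formula) : KProv X (A.impl (B.impl A))
  | ax2 (A B C : Formula) : KProv X ((A.impl B).impl ((A.impl (B.impl C)).impl (A.impl C)))
  | andI (A B : Formula) : KProv X (A.impl (B.impl (A.and B)))
  | andE1 (A B : Formula) : KProv X ((A.and B).impl A)
  | andE2 (A B : Formula) : KProv X ((A.and B).impl B)
  | orI1 (A B : Formula) : KProv X (A.impl (A.or B))
  | orI2 (A B : Formula) : KProv X (B.impl (A.or B))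
  | orE (A B C : Formula) : KProv X ((A.impl C).impl ((B.impl C).impl ((A.or B).impl C)))
  | negI (A B : Formula) : KProv X ((A.impl B).impl ((A.impl B.negf).impl A.negf))
  | negE (A : Formula) : KProv X (A.negf.negf.impl A)
  | axK (A B : Formula) :
      KProv X ((Formula.box (A.impl B)).impl ((Formula.box A).impl (Formula.box B)))
  | mp {A B : Formula} : KProv X (A.impl B) → KProv X A → KProv X B
  | nec {A : Formula} : KProv X A → KProv X (Formula.box A)
  | path {n : ℕ} (hn : n ∈ X) (A : Formula) :
      KProv X ((Formula.diaIter n A).impl (Formula.dia A))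

/-- The approximations `X_p` of the completion of `X`. -/
def compStep (X : Set ℕ) : ℕ → Set ℕ
  | 0 => X
  | p+1 => compStep X p ∪ {k | ∃ m n, m ∈ compStep X p ∧ n ∈ compStep X p ∧ k = m + n - 1}

/-! ### Auxiliary development -/

namespace NSeq

theorem perm_refl : ∀ Γ : NSeq, Perm Γ Γ
  | nil => .nil
  | fcons A Γ => .fcons A (perm_refl Γ)
  | bcons B Γ => .bcons (perm_refl B) (perm_refl Γ)

theorem perm_symm {Γ Δ : NSeq} (h : Perm Γ Δ) : Perm Δ Γ := by
  induction h with
  | nil => exact .nil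
  | fcons A _ ih => exact .fcons A ih
  | bcons _ _ ih1 ih2 => exact .bcons ih1 ih2
  | swapff A B Γ => exact .swapff B A Γ
  | swapfb A B Γ => exact .swapbf A B Γ
  | swapbf A B Γ => exact .swapfb A B Γ
  | swapbb B C Γ => exact .swapbb C B Γ
  | trans _ _ ih1 ih2 => exact .trans ih2 ih1

theorem append_nil : ∀ Γ : NSeq, Γ.append nil = Γ
  | nil => rfl
  | fcons A Γ => by simp [append, append_nil Γ]
  | bcons B Γ => by simp [append, append_nil Γ]

end NSeq

/-- A list of formulas as a flat nested sequent. -/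
def toSeq : List Formula → NSeq
  | [] => NSeq.nil
  | A :: L => NSeq.fcons A (toSeq L)

theorem toSeq_append : ∀ L₁ L₂ : List Formula,
    toSeq (L₁ ++ L₂) = (toSeq L₁).append (toSeq L₂)
  | [], _ => rfl
  | A :: L, L₂ => by simp [toSeq, NSeq.append, toSeq_append L L₂]

/-- A nested sequent viewed as a context (everything before the hole). -/
def ctxOf : NSeq → Ctx
  | NSeq.nil => Ctx.hole
  | NSeq.fcons A Γ => Ctx.fcons A (ctxOf Γ)
  | NSeq.bcons B Γ => Ctx.scons B (ctxOf Γ)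

theorem ctxOf_fill : ∀ (Δ Θ : NSeq), (ctxOf Δ).fill Θ = Δ.append Θ
  | NSeq.nil, _ => rfl
  | NSeq.fcons A Γ, Θ => by simp [ctxOf, Ctx.fill, NSeq.append, ctxOf_fill Γ Θ]
  | NSeq.bcons B Γ, Θ => by simp [ctxOf, Ctx.fill, NSeq.append, ctxOf_fill Γ Θ]

theorem toSeq_perm {L L' : List Formula} (h : L.Perm L') :
    NSeq.Perm (toSeq L) (toSeq L') := by
  induction h with
  | nil => exact .nil
  | cons A _ ih => exact .fcons A ih
  | swap A B L => exact .swapff B A (toSeq L)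
  | trans _ _ ih1 ih2 => exact .trans ih1 ih2

namespace Ctx

/-- Composition of contexts: plug the second into the hole of the first. -/
def comp : Ctx → Ctx → Ctx
  | hole, C => C
  | fcons A C, C' => fcons A (C.comp C')
  | scons S C, C' => scons S (C.comp C')
  | binto C S, C' => binto (C.comp C') S

theorem comp_fill : ∀ (C C' : Ctx) (Δ : NSeq),
    (C.comp C').fill Δ = C.fill (C'.fill Δ)
  | hole, _, _ => rfl
  | fcons A C, C', Δ => by simp [comp, fill, comp_fill C C' Δ]
  | scons S C, C', Δ => by simp [comp, fill, comp_fill C C' Δ]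
  | binto C S, C', Δ => by simp [comp, fill, comp_fill C C' Δ]

end Ctx

theorem fill_ctxOf (Γ : Ctx) (Θ Δ : NSeq) :
    (Γ.comp (ctxOf Θ)).fill Δ = Γ.fill (Θ.append Δ) := by
  rw [Ctx.comp_fill, ctxOf_fill]

theorem perm_fill : ∀ (Γ : Ctx) {Δ Δ' : NSeq}, NSeq.Perm Δ Δ' →
    NSeq.Perm (Γ.fill Δ) (Γ.fill Δ')
  | Ctx.hole, _, _, h => h
  | Ctx.fcons A C, _, _, h => .fcons A (perm_fill C h)
  | Ctx.scons S C, _, _, h => .bcons (NSeq.perm_refl S) (perm_fill C h)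
  | Ctx.binto C S, _, _, h => .bcons (perm_fill C h) (NSeq.perm_refl S)

theorem negf_negf : ∀ A : Formula, A.negf.negf = A
  | .pos _ => rfl
  | .neg _ => rfl
  | .and A B => by simp [Formula.negf, negf_negf A, negf_negf B]
  | .or A B => by simp [Formula.negf, negf_negf A, negf_negf B]
  | .box A => by simp [Formula.negf, negf_negf A]
  | .dia A => by simp [Formula.negf, negf_negf A]

/-! Moving a formula (resp. a box) over a sequent, by permutation. -/

theorem permMove : ∀ (Θ : NSeq) (F : Formula) (Λ : NSeq),
    NSeq.Perm (NSeq.fcons F (Θ.append Λ)) (Θ.append (NSeq.fcons F Λ))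
  | .nil, _, _ => NSeq.perm_refl _
  | .fcons G Θ, F, Λ => (NSeq.Perm.swapff F G _).trans (.fcons G (permMove Θ F Λ))
  | .bcons S Θ, F, Λ => (NSeq.Perm.swapfb F S _).trans (.bcons (NSeq.perm_refl S) (permMove Θ F Λ))

theorem permMoveB : ∀ (Θ : NSeq) (S : NSeq) (Λ : NSeq),
    NSeq.Perm (NSeq.bcons S (Θ.append Λ)) (Θ.append (NSeq.bcons S Λ))
  | .nil, _, _ => NSeq.perm_refl _
  | .fcons G Θ, S, Λ => (NSeq.Perm.swapbf G S _).trans (.fcons G (permMoveB Θ S Λ))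
  | .bcons T Θ, S, Λ => (NSeq.Perm.swapbb S T _).trans (.bcons (NSeq.perm_refl T) (permMoveB Θ S Λ))

theorem perm_tail1 (Θ : NSeq) (F : Formula) :
    NSeq.Perm (NSeq.fcons F Θ) (Θ.append (NSeq.fcons F NSeq.nil)) := by
  conv_lhs => rw [← NSeq.append_nil Θ]
  exact permMove Θ F .nil

theorem perm_tail2 (Θ : NSeq) (F G : Formula) :
    NSeq.Perm (NSeq.fcons F (NSeq.fcons G Θ))
      (Θ.append (NSeq.fcons F (NSeq.fcons G NSeq.nil))) := by
  conv_lhs => rw [← NSeq.append_nil Θ]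
  exact (NSeq.Perm.fcons F (permMove Θ G _)).trans (permMove Θ F _)

theorem perm_tailb1 (Θ : NSeq) (S : NSeq) :
    NSeq.Perm (NSeq.bcons S Θ) (Θ.append (NSeq.bcons S NSeq.nil)) := by
  conv_lhs => rw [← NSeq.append_nil Θ]
  exact permMoveB Θ S .nil

theorem perm_tail_fb (Θ : NSeq) (F : Formula) (S : NSeq) :
    NSeq.Perm (NSeq.fcons F (NSeq.bcons S Θ))
      (Θ.append (NSeq.fcons F (NSeq.bcons S NSeq.nil))) := by
  conv_lhs => rw [← NSeq.append_nil Θ]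
  exact (NSeq.Perm.fcons F (permMoveB Θ S _)).trans (permMove Θ F _)

section Prf

variable {Xk X4 : Set ℕ} {ρ : ℕ → Prop}

theorem prf_succ {h : ℕ} {Γ : NSeq} (hp : Prf Xk X4 ρ h Γ) : Prf Xk X4 ρ (h + 1) Γ := by
  induction hp with
  | id Γ p h => exact .id Γ p (h + 1)
  | orR Γ A B _ ih => exact .orR Γ A B ih
  | andR Γ A B _ _ ih1 ih2 => exact .andR Γ A B ih1 ih2
  | boxR Γ A _ ih => exact .boxR Γ A ih
  | diaR Γ A Δ _ ih => exact .diaR Γ A Δ ih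
  | propk Γ A Δs Δn hn _ ih => exact .propk Γ A Δs Δn hn ih
  | prop4 Γ A Δs Δl hn _ ih => exact .prop4 Γ A Δs Δl hn ih
  | cut Γ A hA _ _ ih1 ih2 => exact .cut Γ A hA ih1 ih2
  | exch hperm _ ih => exact .exch hperm ih

theorem prf_mono {h h' : ℕ} {Γ : NSeq} (hle : h ≤ h') (hp : Prf Xk X4 ρ h Γ) :
    Prf Xk X4 ρ h' Γ := by
  induction hle with
  | refl => exact hp
  | step _ ih => exact prf_succ ih

theorem prf_deep {h : ℕ} {Δ : NSeq} (hp : Prf Xk X4 ρ h Δ) (Γ : Ctx) :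
    Prf Xk X4 ρ h (Γ.fill Δ) := by
  induction hp with
  | id Γ' p n => rw [← Ctx.comp_fill]; exact .id _ p n
  | orR Γ' A B _ ih => rw [← Ctx.comp_fill]; exact .orR _ A B (by rw [Ctx.comp_fill]; exact ih)
  | andR Γ' A B _ _ ih1 ih2 =>
      rw [← Ctx.comp_fill]
      exact .andR _ A B (by rw [Ctx.comp_fill]; exact ih1) (by rw [Ctx.comp_fill]; exact ih2)
  | boxR Γ' A _ ih => rw [← Ctx.comp_fill]; exact .boxR _ A (by rw [Ctx.comp_fill]; exact ih)
  | diaR Γ' A Δ' _ ih =>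
      rw [← Ctx.comp_fill]; exact .diaR _ A Δ' (by rw [Ctx.comp_fill]; exact ih)
  | propk Γ' A Δs Δn hn _ ih =>
      rw [← Ctx.comp_fill]; exact .propk _ A Δs Δn hn (by rw [Ctx.comp_fill]; exact ih)
  | prop4 Γ' A Δs Δl hn _ ih =>
      rw [← Ctx.comp_fill]; exact .prop4 _ A Δs Δl hn (by rw [Ctx.comp_fill]; exact ih)
  | cut Γ' A hA _ _ ih1 ih2 =>
      rw [← Ctx.comp_fill]
      exact .cut _ A hA (by rw [Ctx.comp_fill]; exact ih1) (by rw [Ctx.comp_fill]; exact ih2)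
  | exch hperm _ ih => exact .exch (perm_fill Γ hperm) ih

/-! Provable-level versions of the rules. -/

theorem pvExch {Γ Δ : NSeq} (h : NSeq.Perm Γ Δ) : Provable Xk X4 ρ Γ → Provable Xk X4 ρ Δ
  | ⟨n, hp⟩ => ⟨n, .exch h hp⟩

theorem pvId (Γ : Ctx) (p : ℕ) :
    Provable Xk X4 ρ (Γ.fill (NSeq.fcons (.pos p) (NSeq.fcons (.neg p) NSeq.nil))) :=
  ⟨0, .id Γ p 0⟩

theorem pvOrR (Γ : Ctx) (A B : Formula) :
    Provable Xk X4 ρ (Γ.fill (NSeq.fcons A (NSeq.fcons B NSeq.nil))) →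
    Provable Xk X4 ρ (Γ.fill (NSeq.fcons (.or A B) NSeq.nil))
  | ⟨n, hp⟩ => ⟨n + 1, .orR Γ A B hp⟩

theorem pvAndR (Γ : Ctx) (A B : Formula) :
    Provable Xk X4 ρ (Γ.fill (NSeq.fcons A NSeq.nil)) →
    Provable Xk X4 ρ (Γ.fill (NSeq.fcons B NSeq.nil)) →
    Provable Xk X4 ρ (Γ.fill (NSeq.fcons (.and A B) NSeq.nil))
  | ⟨n, hp⟩, ⟨m, hq⟩ =>
    ⟨max n m + 1, .andR Γ A B (prf_mono (le_max_left n m) hp) (prf_mono (le_max_right n m) hq)⟩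

theorem pvBoxR (Γ : Ctx) (A : Formula) :
    Provable Xk X4 ρ (Γ.fill (NSeq.bcons (NSeq.fcons A NSeq.nil) NSeq.nil)) →
    Provable Xk X4 ρ (Γ.fill (NSeq.fcons (.box A) NSeq.nil))
  | ⟨n, hp⟩ => ⟨n + 1, .boxR Γ A hp⟩

theorem pvDiaR (Γ : Ctx) (A : Formula) (Δ : NSeq) :
    Provable Xk X4 ρ (Γ.fill (NSeq.fcons (.dia A) (NSeq.bcons (NSeq.fcons A Δ) NSeq.nil))) →
    Provable Xk X4 ρ (Γ.fill (NSeq.fcons (.dia A) (NSeq.bcons Δ NSeq.nil)))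
  | ⟨n, hp⟩ => ⟨n + 1, .diaR Γ A Δ hp⟩

theorem pvPropk (Γ : Ctx) (A : Formula) (Δs : List NSeq) (Δn : NSeq)
    (hn : Δs.length + 1 ∈ Xk) :
    Provable Xk X4 ρ (Γ.fill (NSeq.fcons (.dia A) (nestBox Δs (NSeq.fcons A Δn)))) →
    Provable Xk X4 ρ (Γ.fill (NSeq.fcons (.dia A) (nestBox Δs Δn)))
  | ⟨n, hp⟩ => ⟨n + 1, .propk Γ A Δs Δn hn hp⟩

theorem pvCut (Γ : Ctx) (A : Formula) (hA : ρ A.deg) :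
    Provable Xk X4 ρ (Γ.fill (NSeq.fcons A NSeq.nil)) →
    Provable Xk X4 ρ (Γ.fill (NSeq.fcons A.negf NSeq.nil)) →
    Provable Xk X4 ρ (Γ.fill NSeq.nil)
  | ⟨n, hp⟩, ⟨m, hq⟩ =>
    ⟨max n m + 1, .cut Γ A hA (prf_mono (le_max_left n m) hp) (prf_mono (le_max_right n m) hq)⟩

theorem pvDeep {Δ : NSeq} (Γ : Ctx) : Provable Xk X4 ρ Δ → Provable Xk X4 ρ (Γ.fill Δ)
  | ⟨n, hp⟩ => ⟨n, prf_deep hp Γ⟩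

/-! Rules with a trailing sequent `Θ` in the hole. -/

theorem pvOrR' (Γ : Ctx) (A B : Formula) (Θ : NSeq)
    (h : Provable Xk X4 ρ (Γ.fill (.fcons A (.fcons B Θ)))) :
    Provable Xk X4 ρ (Γ.fill (.fcons (Formula.or A B) Θ)) := by
  have h1 := pvExch (perm_fill Γ (perm_tail2 Θ A B)) h
  rw [← fill_ctxOf] at h1
  have h2 := pvOrR _ A B h1
  rw [fill_ctxOf] at h2
  exact pvExch (perm_fill Γ (NSeq.perm_symm (perm_tail1 Θ _))) h2

theorem pvAndR' (Γ : Ctx) (A B : Formula) (Θ : NSeq)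
    (h1 : Provable Xk X4 ρ (Γ.fill (.fcons A Θ)))
    (h2 : Provable Xk X4 ρ (Γ.fill (.fcons B Θ))) :
    Provable Xk X4 ρ (Γ.fill (.fcons (Formula.and A B) Θ)) := by
  have g1 := pvExch (perm_fill Γ (perm_tail1 Θ A)) h1
  rw [← fill_ctxOf] at g1
  have g2 := pvExch (perm_fill Γ (perm_tail1 Θ B)) h2
  rw [← fill_ctxOf] at g2
  have g := pvAndR _ A B g1 g2
  rw [fill_ctxOf] at g
  exact pvExch (perm_fill Γ (NSeq.perm_symm (perm_tail1 Θ _))) g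

theorem pvBoxR' (Γ : Ctx) (A : Formula) (Θ : NSeq)
    (h : Provable Xk X4 ρ (Γ.fill (.bcons (.fcons A .nil) Θ))) :
    Provable Xk X4 ρ (Γ.fill (.fcons (Formula.box A) Θ)) := by
  have h1 := pvExch (perm_fill Γ (perm_tailb1 Θ _)) h
  rw [← fill_ctxOf] at h1
  have h2 := pvBoxR _ A h1
  rw [fill_ctxOf] at h2
  exact pvExch (perm_fill Γ (NSeq.perm_symm (perm_tail1 Θ _))) h2

theorem pvDiaR' (Γ : Ctx) (A : Formula) (Δ Θ : NSeq)
    (h : Provable Xk X4 ρ (Γ.fill (.fcons (Formula.dia A) (.bcons (.fcons A Δ) Θ)))) :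
    Provable Xk X4 ρ (Γ.fill (.fcons (Formula.dia A) (.bcons Δ Θ))) := by
  have h1 := pvExch (perm_fill Γ (perm_tail_fb Θ _ _)) h
  rw [← fill_ctxOf] at h1
  have h2 := pvDiaR _ A Δ h1
  rw [fill_ctxOf] at h2
  exact pvExch (perm_fill Γ (NSeq.perm_symm (perm_tail_fb Θ _ _))) h2

theorem pvCut' (Γ : Ctx) (C : Formula) (Θ : NSeq) (hC : ρ C.deg)
    (h1 : Provable Xk X4 ρ (Γ.fill (.fcons C Θ)))
    (h2 : Provable Xk X4 ρ (Γ.fill (.fcons C.negf Θ))) :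
    Provable Xk X4 ρ (Γ.fill Θ) := by
  have g1 := pvExch (perm_fill Γ (perm_tail1 Θ C)) h1
  rw [← fill_ctxOf] at g1
  have g2 := pvExch (perm_fill Γ (perm_tail1 Θ C.negf)) h2
  rw [← fill_ctxOf] at g2
  have g := pvCut _ C hC g1 g2
  rw [fill_ctxOf, NSeq.append_nil] at g
  exact g

/-- Generalized identity. -/
theorem pvGid : ∀ (A : Formula) (Γ : Ctx) (Θ : NSeq),
    Provable Xk X4 ρ (Γ.fill (NSeq.fcons A (NSeq.fcons A.negf Θ)))
  | .pos p, Γ, Θ => by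
      have h := pvId (Xk := Xk) (X4 := X4) (ρ := ρ) (Γ.comp (ctxOf Θ)) p
      rw [fill_ctxOf] at h
      exact pvExch (perm_fill Γ (NSeq.perm_symm (perm_tail2 Θ _ _))) h
  | .neg p, Γ, Θ => by
      have h := pvId (Xk := Xk) (X4 := X4) (ρ := ρ) (Γ.comp (ctxOf Θ)) p
      rw [fill_ctxOf] at h
      have h2 := pvExch (perm_fill Γ (NSeq.perm_symm (perm_tail2 Θ _ _))) h
      exact pvExch (perm_fill Γ (NSeq.Perm.swapff _ _ _)) h2
  | .and A B, Γ, Θ => by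
      show Provable Xk X4 ρ
        (Γ.fill (.fcons (A.and B) (.fcons (Formula.or A.negf B.negf) Θ)))
      refine pvExch (perm_fill Γ (NSeq.Perm.swapff _ _ _)) ?_
      refine pvOrR' Γ A.negf B.negf (.fcons (A.and B) Θ) ?_
      refine pvExch (perm_fill Γ
        ((NSeq.Perm.swapff _ _ _).trans (.fcons _ (NSeq.Perm.swapff _ _ _)))) ?_
      refine pvAndR' Γ A B (.fcons A.negf (.fcons B.negf Θ)) ?_ ?_
      · exact pvGid A Γ (.fcons B.negf Θ)
      · exact pvExch (perm_fill Γ (.fcons B (NSeq.Perm.swapff _ _ _)))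
          (pvGid B Γ (.fcons A.negf Θ))
  | .or A B, Γ, Θ => by
      show Provable Xk X4 ρ
        (Γ.fill (.fcons (A.or B) (.fcons (Formula.and A.negf B.negf) Θ)))
      refine pvExch (perm_fill Γ (NSeq.Perm.swapff _ _ _)) ?_
      refine pvAndR' Γ A.negf B.negf (.fcons (A.or B) Θ) ?_ ?_
      · refine pvExch (perm_fill Γ (NSeq.Perm.swapff _ _ _)) ?_
        refine pvOrR' Γ A B (.fcons A.negf Θ) ?_
        exact pvExch (perm_fill Γ (.fcons A (NSeq.Perm.swapff _ _ _)))
          (pvGid A Γ (.fcons B Θ))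
      · refine pvExch (perm_fill Γ (NSeq.Perm.swapff _ _ _)) ?_
        refine pvOrR' Γ A B (.fcons B.negf Θ) ?_
        have g := pvGid B (Γ.comp (.fcons A .hole)) Θ
        rw [Ctx.comp_fill] at g
        exact g
  | .box A, Γ, Θ => by
      show Provable Xk X4 ρ
        (Γ.fill (.fcons (Formula.box A) (.fcons (Formula.dia A.negf) Θ)))
      refine pvExch (perm_fill Γ (NSeq.Perm.swapff _ _ _)) ?_
      have hctx : ∀ Δ : NSeq, (Γ.comp (.fcons (Formula.dia A.negf) .hole)).fill Δ =
          Γ.fill (.fcons (Formula.dia A.negf) Δ) := fun Δ => by rw [Ctx.comp_fill]; rfl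
      rw [← hctx]
      refine pvBoxR' _ A Θ ?_
      rw [hctx]
      refine pvDiaR' Γ A.negf (.fcons A .nil) Θ ?_
      have g := pvGid A (Γ.comp (.fcons (Formula.dia A.negf) (.binto .hole Θ))) NSeq.nil
      have g' := pvExch
        (perm_fill (Γ.comp (.fcons (Formula.dia A.negf) (.binto .hole Θ)))
          (NSeq.Perm.swapff A A.negf NSeq.nil)) g
      rw [Ctx.comp_fill] at g'
      exact g'
  | .dia A, Γ, Θ => by
      show Provable Xk X4 ρ
        (Γ.fill (.fcons (Formula.dia A) (.fcons (Formula.box A.negf) Θ)))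
      have hctx : ∀ Δ : NSeq, (Γ.comp (.fcons (Formula.dia A) .hole)).fill Δ =
          Γ.fill (.fcons (Formula.dia A) Δ) := fun Δ => by rw [Ctx.comp_fill]; rfl
      rw [← hctx]
      refine pvBoxR' _ A.negf Θ ?_
      rw [hctx]
      refine pvDiaR' Γ A (.fcons A.negf .nil) Θ ?_
      have g := pvGid A (Γ.comp (.fcons (Formula.dia A) (.binto .hole Θ))) NSeq.nil
      rw [Ctx.comp_fill] at g
      exact g

end Prf
section ListLevel

variable {Xk X4 : Set ℕ} {ρ : ℕ → Prop}

/-- Provability of a flat list of formulas. -/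
abbrev PL (Xk X4 : Set ℕ) (ρ : ℕ → Prop) (L : List Formula) : Prop :=
  Provable Xk X4 ρ (toSeq L)

theorem pl_perm {L L' : List Formula} (h : L.Perm L') (hp : PL Xk X4 ρ L) :
    PL Xk X4 ρ L' := pvExch (toSeq_perm h) hp

theorem pl_orR (L₁ L₂ : List Formula) (A B : Formula)
    (h : PL Xk X4 ρ (L₁ ++ A :: B :: L₂)) : PL Xk X4 ρ (L₁ ++ (A.or B) :: L₂) := by
  have h1 : PL Xk X4 ρ (A :: B :: (L₁ ++ L₂)) :=
    pl_perm (List.perm_middle.trans (.cons A List.perm_middle)) h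
  have h2 : PL Xk X4 ρ ((A.or B) :: (L₁ ++ L₂)) :=
    pvOrR' Ctx.hole A B (toSeq (L₁ ++ L₂)) h1
  exact pl_perm List.perm_middle.symm h2

theorem pl_andR (L₁ L₂ : List Formula) (A B : Formula)
    (h1 : PL Xk X4 ρ (L₁ ++ A :: L₂)) (h2 : PL Xk X4 ρ (L₁ ++ B :: L₂)) :
    PL Xk X4 ρ (L₁ ++ (A.and B) :: L₂) := by
  have g1 : PL Xk X4 ρ (A :: (L₁ ++ L₂)) := pl_perm List.perm_middle h1
  have g2 : PL Xk X4 ρ (B :: (L₁ ++ L₂)) := pl_perm List.perm_middle h2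
  have g : PL Xk X4 ρ ((A.and B) :: (L₁ ++ L₂)) :=
    pvAndR' Ctx.hole A B (toSeq (L₁ ++ L₂)) g1 g2
  exact pl_perm List.perm_middle.symm g

theorem pl_ax (L₁ L₂ L₃ : List Formula) (A : Formula) :
    PL Xk X4 ρ (L₁ ++ A :: (L₂ ++ A.negf :: L₃)) := by
  have g : PL Xk X4 ρ (A :: A.negf :: (L₁ ++ (L₂ ++ L₃))) :=
    pvGid A Ctx.hole (toSeq (L₁ ++ (L₂ ++ L₃)))
  refine pl_perm ?_ g
  refine List.Perm.trans (.cons A ?_) List.perm_middle.symm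
  -- A.negf :: (L₁ ++ (L₂ ++ L₃)) ~ L₁ ++ (L₂ ++ A.negf :: L₃)
  have e1 : L₁ ++ (L₂ ++ L₃) = (L₁ ++ L₂) ++ L₃ := (List.append_assoc _ _ _).symm
  have e2 : L₁ ++ (L₂ ++ A.negf :: L₃) = (L₁ ++ L₂) ++ A.negf :: L₃ :=
    (List.append_assoc _ _ _).symm
  rw [e1, e2]
  exact List.perm_middle.symm

theorem pl_ax' (L₁ L₂ L₃ : List Formula) (A : Formula) :
    PL Xk X4 ρ (L₁ ++ A.negf :: (L₂ ++ A :: L₃)) := by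
  have := pl_ax (Xk := Xk) (X4 := X4) (ρ := ρ) L₁ L₂ L₃ A.negf
  rwa [negf_negf] at this

theorem pl_weak (L' L : List Formula) (h : PL Xk X4 ρ L) : PL Xk X4 ρ (L' ++ L) := by
  have := pvDeep (ctxOf (toSeq L')) h
  rw [ctxOf_fill, ← toSeq_append] at this
  exact this

/-! ### The Hilbert axioms, derived. -/

theorem plAx1 (A B : Formula) : PL Xk X4 ρ [A.impl (B.impl A)] := by
  show PL Xk X4 ρ [Formula.or A.negf (Formula.or B.negf A)]
  apply pl_orR [] []
  apply pl_orR [A.negf] []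
  exact pl_ax' [] [B.negf] [] A

theorem plAx2 (A B C : Formula) :
    PL Xk X4 ρ [(A.impl B).impl ((A.impl (B.impl C)).impl (A.impl C))] := by
  show PL Xk X4 ρ [Formula.or (Formula.and A.negf.negf B.negf)
    (Formula.or (Formula.and A.negf.negf (Formula.and B.negf.negf C.negf))
      (Formula.or A.negf C))]
  apply pl_orR [] []
  apply pl_orR [_] []
  apply pl_orR [_, _] []
  apply pl_andR [] [Formula.and A.negf.negf (Formula.and B.negf.negf C.negf), A.negf, C]
  · exact pl_ax' [] [Formula.and A.negf.negf (Formula.and B.negf.negf C.negf)] [C] A.negf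
  · apply pl_andR [B.negf] [A.negf, C]
    · exact pl_ax' [B.negf] [] [C] A.negf
    · apply pl_andR [B.negf] [A.negf, C]
      · exact pl_ax [] [] [A.negf, C] B.negf
      · exact pl_ax' [B.negf] [A.negf] [] C

theorem plAndI (A B : Formula) : PL Xk X4 ρ [A.impl (B.impl (A.and B))] := by
  show PL Xk X4 ρ [Formula.or A.negf (Formula.or B.negf (Formula.and A B))]
  apply pl_orR [] []
  apply pl_orR [A.negf] []
  apply pl_andR [A.negf, B.negf] []
  · exact pl_ax' [] [B.negf] [] A
  · exact pl_ax' [A.negf] [] [] B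

theorem plAndE1 (A B : Formula) : PL Xk X4 ρ [(A.and B).impl A] := by
  show PL Xk X4 ρ [Formula.or (Formula.or A.negf B.negf) A]
  apply pl_orR [] []
  apply pl_orR [] [A]
  exact pl_ax' [] [B.negf] [] A

theorem plAndE2 (A B : Formula) : PL Xk X4 ρ [(A.and B).impl B] := by
  show PL Xk X4 ρ [Formula.or (Formula.or A.negf B.negf) B]
  apply pl_orR [] []
  apply pl_orR [] [B]
  exact pl_ax' [A.negf] [] [] B

theorem plOrI1 (A B : Formula) : PL Xk X4 ρ [A.impl (A.or B)] := by
  show PL Xk X4 ρ [Formula.or A.negf (Formula.or A B)]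
  apply pl_orR [] []
  apply pl_orR [A.negf] []
  exact pl_ax' [] [] [B] A

theorem plOrI2 (A B : Formula) : PL Xk X4 ρ [B.impl (A.or B)] := by
  show PL Xk X4 ρ [Formula.or B.negf (Formula.or A B)]
  apply pl_orR [] []
  apply pl_orR [B.negf] []
  exact pl_ax' [] [A] [] B

theorem plOrE (A B C : Formula) :
    PL Xk X4 ρ [(A.impl C).impl ((B.impl C).impl ((A.or B).impl C))] := by
  show PL Xk X4 ρ [Formula.or (Formula.and A.negf.negf C.negf)
    (Formula.or (Formula.and B.negf.negf C.negf)
      (Formula.or (Formula.and A.negf B.negf) C))]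
  apply pl_orR [] []
  apply pl_orR [_] []
  apply pl_orR [_, _] []
  apply pl_andR [] [Formula.and B.negf.negf C.negf, Formula.and A.negf B.negf, C]
  · apply pl_andR [A.negf.negf, Formula.and B.negf.negf C.negf] [C]
    · exact pl_ax' [] [Formula.and B.negf.negf C.negf] [C] A.negf
    · apply pl_andR [A.negf.negf] [B.negf, C]
      · exact pl_ax' [A.negf.negf] [] [C] B.negf
      · exact pl_ax' [A.negf.negf] [B.negf] [] C
  · exact pl_ax' [] [Formula.and B.negf.negf C.negf, Formula.and A.negf B.negf] [] C

theorem plNegI (A B : Formula) :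
    PL Xk X4 ρ [(A.impl B).impl ((A.impl B.negf).impl A.negf)] := by
  show PL Xk X4 ρ [Formula.or (Formula.and A.negf.negf B.negf)
    (Formula.or (Formula.and A.negf.negf B.negf.negf) A.negf)]
  apply pl_orR [] []
  apply pl_orR [_] []
  apply pl_andR [] [Formula.and A.negf.negf B.negf.negf, A.negf]
  · exact pl_ax' [] [Formula.and A.negf.negf B.negf.negf] [] A.negf
  · apply pl_andR [B.negf] [A.negf]
    · exact pl_ax' [B.negf] [] [] A.negf
    · exact pl_ax [] [] [A.negf] B.negf

theorem plNegE (A : Formula) : PL Xk X4 ρ [A.negf.negf.impl A] := by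
  show PL Xk X4 ρ [Formula.or A.negf.negf.negf A]
  apply pl_orR [] []
  rw [negf_negf A.negf]
  exact pl_ax' [] [] [] A

theorem plAxK (A B : Formula) :
    PL Xk X4 ρ [(Formula.box (A.impl B)).impl ((Formula.box A).impl (Formula.box B))] := by
  show PL Xk X4 ρ [Formula.or (Formula.dia (Formula.and A.negf.negf B.negf))
    (Formula.or (Formula.dia A.negf) (Formula.box B))]
  apply pl_orR [] []
  apply pl_orR [_] []
  show Provable Xk X4 ρ (NSeq.fcons (Formula.dia (Formula.and A.negf.negf B.negf))
    (NSeq.fcons (Formula.dia A.negf) (NSeq.fcons (Formula.box B) NSeq.nil)))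
  refine pvBoxR (Ctx.fcons (Formula.dia (Formula.and A.negf.negf B.negf))
    (Ctx.fcons (Formula.dia A.negf) Ctx.hole)) B ?_
  refine pvDiaR (Ctx.fcons (Formula.dia (Formula.and A.negf.negf B.negf)) Ctx.hole)
    A.negf (NSeq.fcons B NSeq.nil) ?_
  refine pvExch (NSeq.Perm.swapff (Formula.dia A.negf)
    (Formula.dia (Formula.and A.negf.negf B.negf)) _) ?_
  refine pvDiaR (Ctx.fcons (Formula.dia A.negf) Ctx.hole)
    (Formula.and A.negf.negf B.negf) (NSeq.fcons A.negf (NSeq.fcons B NSeq.nil)) ?_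
  refine pvExch (perm_fill (Ctx.fcons (Formula.dia A.negf)
      (Ctx.fcons (Formula.dia (Formula.and A.negf.negf B.negf))
        (Ctx.binto Ctx.hole NSeq.nil)))
    ((NSeq.Perm.fcons A.negf
        (NSeq.Perm.swapff B (Formula.and A.negf.negf B.negf) NSeq.nil)).trans
      (NSeq.Perm.swapff A.negf (Formula.and A.negf.negf B.negf)
        (NSeq.fcons B NSeq.nil)))) ?_
  refine pvAndR (Ctx.fcons (Formula.dia A.negf)
    (Ctx.fcons (Formula.dia (Formula.and A.negf.negf B.negf))
      (Ctx.binto (Ctx.fcons A.negf (Ctx.fcons B Ctx.hole)) NSeq.nil)))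
    A.negf.negf B.negf ?_ ?_
  · -- inner box: A.negf, B, A.negf.negf
    have g := pvGid (Xk := Xk) (X4 := X4) (ρ := ρ) A.negf
      (Ctx.fcons (Formula.dia A.negf)
        (Ctx.fcons (Formula.dia (Formula.and A.negf.negf B.negf))
          (Ctx.binto Ctx.hole NSeq.nil))) (NSeq.fcons B NSeq.nil)
    exact pvExch (perm_fill (Ctx.fcons (Formula.dia A.negf)
      (Ctx.fcons (Formula.dia (Formula.and A.negf.negf B.negf))
        (Ctx.binto Ctx.hole NSeq.nil)))
      (.fcons _ (NSeq.Perm.swapff _ _ _))) g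
  · -- inner box: A.negf, B, B.negf
    exact pvGid B (Ctx.fcons (Formula.dia A.negf)
      (Ctx.fcons (Formula.dia (Formula.and A.negf.negf B.negf))
        (Ctx.binto (Ctx.fcons A.negf Ctx.hole) NSeq.nil))) NSeq.nil

end ListLevel
/-! ### The path axiom -/

/-- `□ⁿ A`. -/
def boxIter : ℕ → Formula → Formula
  | 0, A => A
  | n+1, A => .box (boxIter n A)

theorem negf_diaIter (n : ℕ) (A : Formula) :
    (Formula.diaIter n A).negf = boxIter n A.negf := by
  induction n with
  | zero => rfl
  | succ n ih => simp [Formula.diaIter, Formula.negf, boxIter, ih]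

theorem boxIter_inner (n : ℕ) (A : Formula) :
    boxIter n (Formula.box A) = boxIter (n + 1) A := by
  induction n with
  | zero => rfl
  | succ n ih => simp [boxIter, ih]

/-- The context of `n` nested boxes. -/
def iterCtx : ℕ → Ctx
  | 0 => .hole
  | n+1 => .binto (iterCtx n) .nil

theorem iterCtx_fill (n : ℕ) (Δ : NSeq) : (iterCtx n).fill Δ = iterBox n Δ := by
  induction n with
  | zero => rfl
  | succ n ih => simp [iterCtx, Ctx.fill, iterBox, ih]

theorem iterBox_inner (n : ℕ) (Δ : NSeq) :
    iterBox (n + 1) Δ = iterBox n (NSeq.bcons Δ NSeq.nil) := by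
  induction n with
  | zero => rfl
  | succ n ih => show ((iterBox (n+1) Δ).bcons NSeq.nil) = _; rw [ih]; rfl

theorem nestBox_rep (k : ℕ) (Θ : NSeq) :
    nestBox (List.replicate k NSeq.nil) Θ = iterBox (k + 1) Θ := by
  induction k with
  | zero => rfl
  | succ k ih => simp [List.replicate, nestBox, NSeq.append, ih, iterBox]

section Path

variable {Xk X4 : Set ℕ} {ρ : ℕ → Prop}

theorem box_collect (D : Formula) : ∀ (k : ℕ) (B : Formula),
    Provable Xk X4 ρ (NSeq.fcons D (iterBox k (NSeq.fcons B NSeq.nil))) →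
    Provable Xk X4 ρ (NSeq.fcons D (NSeq.fcons (boxIter k B) NSeq.nil))
  | 0, B, h => h
  | k+1, B, h => by
      rw [iterBox_inner] at h
      have h2 := pvBoxR (Ctx.fcons D (iterCtx k)) B
        (by simpa only [Ctx.fill, iterCtx_fill] using h)
      simp only [Ctx.fill, iterCtx_fill] at h2
      have h3 := box_collect D k (Formula.box B) h2
      rwa [boxIter_inner] at h3

/-- Derivation of the path axiom `♦ⁿA ⊃ ♦A` for `n ∈ Xk`, `n > 1`. -/
theorem pathPv (n : ℕ) (hn : n ∈ Xk) (hn1 : 1 ≤ n) (A : Formula) :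
    Provable Xk X4 ρ
      (NSeq.fcons ((Formula.diaIter n A).impl (Formula.dia A)) NSeq.nil) := by
  show Provable Xk X4 ρ
    (NSeq.fcons (Formula.or (Formula.diaIter n A).negf (Formula.dia A)) NSeq.nil)
  refine pvOrR Ctx.hole _ _ ?_
  refine pvExch (NSeq.Perm.swapff (Formula.dia A) (Formula.diaIter n A).negf NSeq.nil) ?_
  rw [negf_diaIter]
  apply box_collect (Formula.dia A) n A.negf
  -- goal : fcons (dia A) (iterBox n (fcons A.negf nil))
  have hm : n - 1 + 1 = n := by omega
  have base := pvGid (Xk := Xk) (X4 := X4) (ρ := ρ) A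
    (Ctx.fcons (Formula.dia A) (iterCtx n)) NSeq.nil
  simp only [Ctx.fill, iterCtx_fill] at base
  have step := pvPropk (Xk := Xk) (X4 := X4) (ρ := ρ) Ctx.hole A
    (List.replicate (n-1) NSeq.nil) (NSeq.fcons A.negf NSeq.nil)
    (by simpa [hm] using hn)
    (by simpa only [Ctx.fill, nestBox_rep, hm] using base)
  simpa only [Ctx.fill, nestBox_rep, hm] using step

end Path
/-- The completion `X̂` of `X`. -/
def completion (X : Set ℕ) : Set ℕ := ⋃ p, compStep X p

/-- For each `n ∈ X`, the axiom `♦ⁿA ⊃ ♦A` is derivable in `nK + ♦ₖX + cut`;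
hence every theorem of `K + 4^X` is provable in `nK + ♦ₖX + cut`. -/
theorem cut_completeness (X : Set ℕ) (hX : X ⊆ {n : ℕ | 1 < n}) :
    (∀ n ∈ X, ∀ A : Formula,
      Provable X ∅ cutAll
        (NSeq.fcons ((Formula.diaIter n A).impl (Formula.dia A)) NSeq.nil)) ∧
    (∀ A : Formula, KProv X A → Provable X ∅ cutAll (NSeq.fcons A NSeq.nil)) := by
  have part1 : ∀ n ∈ X, ∀ A : Formula,
      Provable X ∅ cutAll
        (NSeq.fcons ((Formula.diaIter n A).impl (Formula.dia A)) NSeq.nil) := by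
    intro n hn A
    exact pathPv n hn (le_of_lt (hX hn)) A
  refine ⟨part1, ?_⟩
  intro A hA
  induction hA with
  | ax1 A B => exact plAx1 A B
  | ax2 A B C => exact plAx2 A B C
  | andI A B => exact plAndI A B
  | andE1 A B => exact plAndE1 A B
  | andE2 A B => exact plAndE2 A B
  | orI1 A B => exact plOrI1 A B
  | orI2 A B => exact plOrI2 A B
  | orE A B C => exact plOrE A B C
  | negI A B => exact plNegI A B
  | negE A => exact plNegE A
  | axK A B => exact plAxK A B
  | @mp A B h1 h2 ih1 ih2 =>
      show PL X ∅ cutAll [B]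
      refine pvCut' Ctx.hole (Formula.or A.negf B) (toSeq [B]) trivial ?_ ?_
      · -- [A ⊃ B, B]
        have w : PL X ∅ cutAll [B, Formula.or A.negf B] := pl_weak [B] _ ih1
        exact pl_perm (List.Perm.swap (Formula.or A.negf B) B []) w
      · -- [(A ⊃ B)ᶜ, B] = [A ∧ ¬B, B]
        show PL X ∅ cutAll [Formula.and A.negf.negf B.negf, B]
        apply pl_andR [] [B]
        · show PL X ∅ cutAll ([A.negf.negf, B])
          rw [negf_negf]
          exact pl_perm (List.Perm.swap A B []) (pl_weak [B] _ ih2)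
        · exact pl_ax' [] [] [] B
  | @nec A h ih =>
      exact pvBoxR Ctx.hole A (pvDeep (Ctx.binto Ctx.hole NSeq.nil) ih)
  | @path n hn A => exact part1 n hn A
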